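/- Let A be SPD and E symmetric with ‖A^{-1/2} E A^{-1/2}‖₂ ≤ μ < 1. Then A + E is SPD and all eigenvalues of (A+E)^{-1/2} A (A+E)^{-1/2} lie in the interval [1/(1+μ), 1/(1−μ)]. -/

import Mathlib

/-!
Conjugating by `R = A^{-1/2}` turns the norm hypothesis into the relative bound
`|zᵀ E z| ≤ μ zᵀ A z` for all `z`, which already gives `A + E ≻ 0`. For a unit eigenvector `v`
of `S A S` with eigenvalue `λ`, the vector `z = S v` satisfies `zᵀ A z = λ` and
`zᵀ (A + E) z = vᵀ v = 1`, so `1 = λ + zᵀ E z` lies in `[(1 - μ) λ, (1 + μ) λ]`.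
-/

open Matrix

/-- The spectral norm (ℓ²-operator norm) of a real square matrix. -/
noncomputable def matrixSpectralNorm (n : ℕ) (M : Matrix (Fin n) (Fin n) ℝ) : ℝ :=
  ‖LinearMap.toContinuousLinearMap (Matrix.toEuclideanLin M)‖

theorem abs_dotProduct_mulVec_le_matrixSpectralNorm {n : ℕ} (M : Matrix (Fin n) (Fin n) ℝ)
    (x : Fin n → ℝ) : |x ⬝ᵥ M *ᵥ x| ≤ matrixSpectralNorm n M * (x ⬝ᵥ x) := by
  set T := LinearMap.toContinuousLinearMap (Matrix.toEuclideanLin M)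
  set y : EuclideanSpace ℝ (Fin n) := WithLp.toLp 2 x
  have hquad : inner ℝ y (T y) = x ⬝ᵥ M *ᵥ x := by
    simp [T, y, EuclideanSpace.inner_eq_star_dotProduct, dotProduct_comm]
  have hnorm : ‖y‖ ^ 2 = x ⬝ᵥ x := by
    rw [← real_inner_self_eq_norm_sq, EuclideanSpace.inner_eq_star_dotProduct]
    simp [y]
  calc |x ⬝ᵥ M *ᵥ x| = |inner ℝ y (T y)| := by rw [hquad]
    _ ≤ ‖y‖ * ‖T y‖ := abs_real_inner_le_norm y (T y)
    _ ≤ ‖y‖ * (‖T‖ * ‖y‖) := by gcongr; exact T.le_opNorm y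
    _ = matrixSpectralNorm n M * (x ⬝ᵥ x) := by rw [← hnorm, matrixSpectralNorm]; ring

namespace Matrix

variable {ι R : Type*} [Fintype ι]

theorem dotProduct_mulVec_mulVec_eq_transpose_mul_mul [CommSemiring R] (B M : Matrix ι ι R)
    (w : ι → R) :
    (B *ᵥ w) ⬝ᵥ M *ᵥ (B *ᵥ w) = w ⬝ᵥ (Bᵀ * M * B) *ᵥ w := by
  rw [mulVec_mulVec, ← vecMul_transpose, ← dotProduct_mulVec, mulVec_mulVec, ← mul_assoc]

theorem mul_mul_eq_one_of_mul_self_eq_inv [DecidableEq ι] [CommRing R] [IsStablyFiniteRing R]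
    {A B : Matrix ι ι R} (hA : IsUnit A) (hB : B * B = A⁻¹) : B * A * B = 1 := by
  have : B * (B * A) = 1 := by
    rw [← mul_assoc, hB, nonsing_inv_mul _ ((isUnit_iff_isUnit_det A).mp hA)]
  rw [mul_eq_one_comm.mp this]

theorem IsHermitian.exists_eigenvalues_eq_dotProduct [DecidableEq ι]
    {M : Matrix ι ι ℝ} (hM : M.IsHermitian) (i : ι) :
    ∃ v : ι → ℝ, v ⬝ᵥ v = 1 ∧ hM.eigenvalues i = v ⬝ᵥ M *ᵥ v := by
  refine ⟨hM.eigenvectorBasis i, ?_, by simpa using hM.eigenvalues_eq i⟩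
  have hunit : ‖hM.eigenvectorBasis i‖ ^ 2 = 1 := by
    rw [hM.eigenvectorBasis.orthonormal.1 i, one_pow]
  rw [← real_inner_self_eq_norm_sq, EuclideanSpace.inner_eq_star_dotProduct] at hunit
  simpa using hunit

theorem PosDef.add_of_abs_dotProduct_mulVec_le {μ : ℝ}
    {A E : Matrix ι ι ℝ} (hA : A.PosDef) (hE : E.IsSymm) (hμ : μ < 1)
    (hEA : ∀ z, |z ⬝ᵥ E *ᵥ z| ≤ μ * (z ⬝ᵥ A *ᵥ z)) : (A + E).PosDef := by
  refine .of_dotProduct_mulVec_pos (hA.1.add hE) fun x hx => ?_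
  have hAx : 0 < x ⬝ᵥ A *ᵥ x := by simpa using hA.dotProduct_mulVec_pos hx
  have hEx := neg_le_of_abs_le (hEA x)
  rw [star_trivial, add_mulVec, dotProduct_add]
  nlinarith

end Matrix

theorem abs_dotProduct_mulVec_le_of_matrixSpectralNorm_conj_le {n : ℕ} {μ : ℝ}
    {A E R : Matrix (Fin n) (Fin n) ℝ} (hRT : Rᵀ = R) (hRAR : R * A * R = 1)
    (hnorm : matrixSpectralNorm n (R * E * R) ≤ μ) (z : Fin n → ℝ) :
    |z ⬝ᵥ E *ᵥ z| ≤ μ * (z ⬝ᵥ A *ᵥ z) := by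
  obtain ⟨w, rfl⟩ : ∃ w, R *ᵥ w = z :=
    ⟨(A * R) *ᵥ z, by rw [mulVec_mulVec, ← mul_assoc, hRAR, one_mulVec]⟩
  rw [dotProduct_mulVec_mulVec_eq_transpose_mul_mul, dotProduct_mulVec_mulVec_eq_transpose_mul_mul,
    hRT, hRAR, one_mulVec]
  calc |w ⬝ᵥ (R * E * R) *ᵥ w| ≤ matrixSpectralNorm n (R * E * R) * (w ⬝ᵥ w) :=
        abs_dotProduct_mulVec_le_matrixSpectralNorm _ w
    _ ≤ μ * (w ⬝ᵥ w) := by gcongr; exact dotProduct_self_star_nonneg w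

theorem mem_Icc_one_div_of_add_eq_one {μ a e : ℝ} (hμ0 : 0 ≤ μ) (hμ1 : μ < 1)
    (hsum : a + e = 1) (he : |e| ≤ μ * a) : a ∈ Set.Icc (1 / (1 + μ)) (1 / (1 - μ)) := by
  obtain ⟨hlo, hhi⟩ := abs_le.mp he
  constructor
  · rw [div_le_iff₀ (by linarith)]; linarith
  · rw [le_div_iff₀ (by linarith)]; linarith

theorem perturbed_preconditioner_eigenvalue_bounds_general (n : ℕ) (μ : ℝ)
    (A E R : Matrix (Fin n) (Fin n) ℝ)
    (hA : A.PosDef) (hE : E.IsSymm)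
    (hR : R.PosDef) (hRR : R * R = A⁻¹)
    (hμ1 : μ < 1)
    (hnorm : matrixSpectralNorm n (R * E * R) ≤ μ) :
    (A + E).PosDef ∧
    ∀ S : Matrix (Fin n) (Fin n) ℝ, S.PosDef → S * S = (A + E)⁻¹ →
      ∀ (h : (S * A * S).IsHermitian) (i : Fin n),
        h.eigenvalues i ∈ Set.Icc (1 / (1 + μ)) (1 / (1 - μ)) := by
  have hEA := abs_dotProduct_mulVec_le_of_matrixSpectralNorm_conj_le hR.1
    (mul_mul_eq_one_of_mul_self_eq_inv hA.isUnit hRR) hnorm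
  have hAE : (A + E).PosDef := hA.add_of_abs_dotProduct_mulVec_le hE hμ1 hEA
  refine ⟨hAE, fun S hS hSS h i => ?_⟩
  obtain ⟨v, hvv, heig⟩ := h.exists_eigenvalues_eq_dotProduct i
  have hST : Sᵀ = S := hS.1
  have hSAE : S * (A + E) * S = 1 := mul_mul_eq_one_of_mul_self_eq_inv hAE.isUnit hSS
  have hsum : (S *ᵥ v) ⬝ᵥ A *ᵥ (S *ᵥ v) + (S *ᵥ v) ⬝ᵥ E *ᵥ (S *ᵥ v) = 1 := by
    rw [← dotProduct_add, ← add_mulVec, dotProduct_mulVec_mulVec_eq_transpose_mul_mul, hST, hSAE,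
      one_mulVec, hvv]
  have hquad : h.eigenvalues i = (S *ᵥ v) ⬝ᵥ A *ᵥ (S *ᵥ v) := by
    rw [heig, dotProduct_mulVec_mulVec_eq_transpose_mul_mul, hST]
  exact hquad ▸ mem_Icc_one_div_of_add_eq_one ((norm_nonneg _).trans hnorm) hμ1 hsum (hEA _)

/-- Let `A` be SPD and `E` symmetric with `‖A^{-1/2} E A^{-1/2}‖₂ ≤ μ < 1`,
where `R = A^{-1/2}` is the SPD square root of `A⁻¹`.  Then `A + E` is SPD and
all eigenvalues of `(A+E)^{-1/2} A (A+E)^{-1/2}` (where `S = (A+E)^{-1/2}` is the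
SPD square root of `(A+E)⁻¹`) lie in the interval `[1/(1+μ), 1/(1−μ)]`. -/
theorem perturbed_preconditioner_eigenvalue_bounds (n : ℕ) (μ : ℝ)
    (A E R : Matrix (Fin n) (Fin n) ℝ)
    (hA : A.PosDef) (hE : E.IsSymm)
    (hR : R.PosDef) (hRR : R * R = A⁻¹)
    (hμ0 : 0 ≤ μ) (hμ1 : μ < 1)
    (hnorm : matrixSpectralNorm n (R * E * R) ≤ μ) :
    (A + E).PosDef ∧
    ∀ S : Matrix (Fin n) (Fin n) ℝ, S.PosDef → S * S = (A + E)⁻¹ →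
      ∀ (h : (S * A * S).IsHermitian) (i : Fin n),
        h.eigenvalues i ∈ Set.Icc (1 / (1 + μ)) (1 / (1 - μ)) :=
  perturbed_preconditioner_eigenvalue_bounds_general n μ A E R hA hE hR hRR hμ1 hnorm
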